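/- arXiv:2001.01791 — 6 statements merged into one kernel-verified Lean document; each statement's English description precedes it below -/
import Mathlib

section
/- More generally, for all nonnegative integers n and t, the sum of the products j_0 · j_1 · ... · j_t over all compositions (j_0, j_1, ..., j_t) of n into t+1 positive integer parts equals the binomial coefficient C(n + t, 2t + 1). -/
open Finset

/-!
A composition with a zero part contributes a zero product, so the positivity condition can be
dropped and the sum runs over all weak compositions. Splitting off the first part `a` gives
`S_{t+1}(n) = ∑_{a+b=n} a · S_t(b)`, and the inductive step is the hockey-stick identity summed
once more: `∑_{a+b=n} a · C(b+t, 2t+1) = C(n+t+1, 2t+3)`.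
-/

theorem Finset.Nat.sum_antidiagonalTuple_succ {M : Type*} [AddCommMonoid M] (k n : ℕ)
    (g : (Fin (k + 1) → ℕ) → M) :
    ∑ f ∈ Nat.antidiagonalTuple (k + 1) n, g f =
      ∑ p ∈ antidiagonal n, ∑ x ∈ Nat.antidiagonalTuple k p.2, g (Fin.cons p.1 x) := by
  simp only [sum_eq_multiset_sum, Nat.antidiagonalTuple, Multiset.Nat.antidiagonalTuple,
    List.Nat.antidiagonalTuple, Multiset.map_coe, Multiset.sum_coe]
  change _ = ((List.Nat.antidiagonal n).map _).sum
  simp only [List.flatMap, List.map_flatten, List.map_map, Function.comp_def, List.sum_flatten]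

theorem Nat.sum_antidiagonal_add_choose {k m : ℕ} (hkm : k ≤ m) (n : ℕ) :
    ∑ p ∈ antidiagonal n, (p.2 + k).choose m = (n + k + 1).choose (m + 1) := by
  induction n with
  | zero =>
    rw [Nat.antidiagonal_zero, sum_singleton, zero_add, Nat.choose_succ_succ',
      Nat.choose_eq_zero_of_lt (Nat.lt_succ_of_le hkm), add_zero]
  | succ n ih =>
    rw [Nat.sum_antidiagonal_succ, ih, Nat.add_right_comm n 1 k,
      Nat.choose_succ_succ' (n + k + 1)]

theorem Nat.sum_antidiagonal_mul_add_choose {k m : ℕ} (hkm : k ≤ m) (n : ℕ) :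
    ∑ p ∈ antidiagonal n, p.1 * (p.2 + k).choose m = (n + k + 1).choose (m + 2) := by
  induction n with
  | zero =>
    simp [Nat.choose_eq_zero_of_lt (show k + 1 < m + 2 by omega)]
  | succ n ih =>
    simp only [Nat.sum_antidiagonal_succ, zero_mul, zero_add, add_one_mul, sum_add_distrib, ih,
      Nat.sum_antidiagonal_add_choose hkm]
    rw [Nat.add_right_comm n 1 k, Nat.choose_succ_succ' (n + k + 1) (m + 1), add_comm]

theorem Finset.Nat.sum_prod_antidiagonalTuple_succ (t n : ℕ) :
    ∑ f ∈ Nat.antidiagonalTuple (t + 1) n, ∏ i, f i = (n + t).choose (2 * t + 1) := by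
  induction t generalizing n with
  | zero => simp
  | succ t ih =>
    simp only [Nat.sum_antidiagonalTuple_succ, Fin.prod_cons, ← mul_sum, ih]
    rw [Nat.sum_antidiagonal_mul_add_choose (by omega)]
    rfl

/-- The sum of the products `j₀ ⋯ j_t` over all compositions of `n` into
`t+1` positive parts equals `C(n + t, 2t + 1)`. -/
theorem sum_prod_compositions_eq_choose (n t : ℕ) :
    ∑ f ∈ (Finset.Nat.antidiagonalTuple (t + 1) n).filter (fun f => ∀ i, 0 < f i),
      ∏ i, f i = Nat.choose (n + t) (2 * t + 1) := by
  rw [sum_filter_of_ne fun f _ hf i => Nat.pos_of_ne_zero (prod_ne_zero_iff.mp hf i (mem_univ _)),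
    Finset.Nat.sum_prod_antidiagonalTuple_succ]
end

section
/- Let C be a set of labeled trees on n vertices such that any two distinct trees in C share at most one common edge (i.e., the pairwise tree distance is at least n-2). Then |C| ≤ n. -/
/-!
Regard the `m` trees as `(n - 1)`-subsets of the `N = n(n-1)/2` edges of `Kₙ` that pairwise meet
in at most one element, and let `d e` be the number of trees containing the edge `e`. Double
counting gives `∑ d e = m (n - 1)` and `∑ (d e)² = ∑_{T, T'} |T ∩ T'| ≤ m (n - 1) + m (m - 1)`, so
Cauchy–Schwarz yields `m² (n - 1)² ≤ N (m (n - 1) + m (m - 1))`, which simplifies to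
`m (n - 2) ≤ n (n - 2)`.
-/

open Finset

namespace Finset

variable {ι α : Type*} [DecidableEq α] {s : Finset ι} {U : Finset α} {f : ι → Finset α}

theorem sum_card_filter_mem_eq_sum_card (hfU : ∀ i ∈ s, f i ⊆ U) :
    ∑ a ∈ U, #{i ∈ s | a ∈ f i} = ∑ i ∈ s, #(f i) :=
  calc ∑ a ∈ U, #{i ∈ s | a ∈ f i}
      = ∑ i ∈ s, #{a ∈ U | a ∈ f i} := by simp_rw [card_filter]; exact sum_comm
    _ = ∑ i ∈ s, #(f i) := sum_congr rfl fun i hi => by rw [filter_mem_eq_of_subset (hfU i hi)]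

theorem sum_sq_card_filter_mem_eq_sum_sum_card_inter (hfU : ∀ i ∈ s, f i ⊆ U) :
    ∑ a ∈ U, #{i ∈ s | a ∈ f i} ^ 2 = ∑ i ∈ s, ∑ j ∈ s, #(f i ∩ f j) :=
  calc ∑ a ∈ U, #{i ∈ s | a ∈ f i} ^ 2
      = ∑ i ∈ s, ∑ j ∈ s, #{a ∈ U | a ∈ f i ∩ f j} := by
        simp_rw [card_filter, sq, sum_mul_sum, ite_zero_mul_ite_zero, mul_one, mem_inter]
        rw [sum_comm]
        exact sum_congr rfl fun _ _ => sum_comm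
    _ = ∑ i ∈ s, ∑ j ∈ s, #(f i ∩ f j) :=
        sum_congr rfl fun i hi => sum_congr rfl fun j _ => by
        rw [filter_mem_eq_of_subset (inter_subset_left.trans (hfU i hi))]

theorem sum_sum_card_inter_le (hinter : (s : Set ι).Pairwise fun i j => #(f i ∩ f j) ≤ 1) :
    ∑ i ∈ s, ∑ j ∈ s, #(f i ∩ f j) ≤ ∑ i ∈ s, #(f i) + #s * (#s - 1) := by
  classical
  calc ∑ i ∈ s, ∑ j ∈ s, #(f i ∩ f j)
      = ∑ i ∈ s, (#(f i) + ∑ j ∈ s.erase i, #(f i ∩ f j)) :=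
        sum_congr rfl fun i hi => by rw [← add_sum_erase _ _ hi, inter_self]
    _ ≤ ∑ i ∈ s, (#(f i) + (#s - 1)) := by
        gcongr with i hi
        calc ∑ j ∈ s.erase i, #(f i ∩ f j) ≤ #(s.erase i) • 1 :=
              sum_le_card_nsmul _ _ _ fun j hj =>
                hinter hi (mem_of_mem_erase hj) (ne_of_mem_erase hj).symm
          _ = #s - 1 := by rw [card_erase_of_mem hi, smul_eq_mul, mul_one]
    _ = ∑ i ∈ s, #(f i) + #s * (#s - 1) := by rw [sum_add_distrib, sum_const, smul_eq_mul]

theorem sq_sum_card_le_of_pairwise_card_inter_le_one (hfU : ∀ i ∈ s, f i ⊆ U)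
    (hinter : (s : Set ι).Pairwise fun i j => #(f i ∩ f j) ≤ 1) :
    (∑ i ∈ s, #(f i)) ^ 2 ≤ #U * (∑ i ∈ s, #(f i) + #s * (#s - 1)) :=
  calc (∑ i ∈ s, #(f i)) ^ 2
      = (∑ a ∈ U, #{i ∈ s | a ∈ f i}) ^ 2 := by rw [sum_card_filter_mem_eq_sum_card hfU]
    _ ≤ #U * ∑ a ∈ U, #{i ∈ s | a ∈ f i} ^ 2 := sq_sum_le_card_mul_sum_sq
    _ ≤ #U * (∑ i ∈ s, #(f i) + #s * (#s - 1)) := by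
        rw [sum_sq_card_filter_mem_eq_sum_sum_card_inter hfU]
        exact Nat.mul_le_mul_left _ (sum_sum_card_inter_le hinter)

end Finset

theorem le_of_sq_mul_sub_one_le_choose_two {m n : ℕ} (hn : 3 ≤ n)
    (h : (m * (n - 1)) ^ 2 ≤ n.choose 2 * (m * (n - 1) + m * (m - 1))) : m ≤ n := by
  by_contra! hmn
  obtain ⟨k, rfl⟩ : ∃ k, n = k + 1 := ⟨n - 1, by omega⟩
  obtain ⟨l, rfl⟩ : ∃ l, m = l + 1 := ⟨m - 1, by omega⟩
  have hchoose : (k + 1).choose 2 * 2 = (k + 1) * k := by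
    rw [← Nat.add_one_mul_choose_eq, Nat.choose_one_right]
  simp only [Nat.add_sub_cancel] at h
  have h2 := Nat.mul_le_mul_right 2 h
  rw [mul_right_comm, hchoose] at h2
  obtain ⟨j, rfl⟩ : ∃ j, k = j + 2 := ⟨k - 2, by omega⟩
  obtain ⟨c, rfl⟩ : ∃ c, l = j + 3 + c := ⟨l - (j + 3), by omega⟩
  -- `2 (m (n-1))² - n (n-1) (m (n-1) + m (m-1)) = m (n-1) (m-n) (n-2)`
  nlinarith [show 0 < (j + 4 + c) * (j + 2) * (c + 1) * (j + 1) by positivity]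

open SimpleGraph in
/-- If `C` is a set of labeled trees on `n ≥ 3` vertices such that any two
distinct trees of `C` share at most one common edge, then `|C| ≤ n`. -/
theorem card_le_of_pairwise_share_at_most_one_edge (n : ℕ) (hn : 3 ≤ n)
    (C : Finset (SimpleGraph (Fin n))) (htree : ∀ T ∈ C, T.IsTree)
    (hint : ∀ T₁ ∈ C, ∀ T₂ ∈ C, T₁ ≠ T₂ →
      (T₁.edgeSet ∩ T₂.edgeSet).ncard ≤ 1) :
    C.card ≤ n := by
  classical
  have hcard : ∀ T ∈ C, #T.edgeFinset = n - 1 := fun T hT => by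
    have := (htree T hT).card_edgeFinset
    rw [Fintype.card_fin] at this
    omega
  have hinter : (C : Set (SimpleGraph (Fin n))).Pairwise
      fun T₁ T₂ => #(T₁.edgeFinset ∩ T₂.edgeFinset) ≤ 1 := by
    intro T₁ h₁ T₂ h₂ hne
    show #(T₁.edgeFinset ∩ T₂.edgeFinset) ≤ 1
    rw [← Set.ncard_coe_finset, coe_inter, coe_edgeFinset, coe_edgeFinset]
    exact hint T₁ h₁ T₂ h₂ hne
  have h := sq_sum_card_le_of_pairwise_card_inter_le_one
    (fun T _ => edgeFinset_mono (le_top : T ≤ ⊤)) hinter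
  rw [sum_congr rfl hcard, sum_const, smul_eq_mul, card_edgeFinset_top_eq_card_choose_two,
    Fintype.card_fin] at h
  exact le_of_sq_mul_sub_one_le_choose_two hn h
end

section
/- Let C be a set of labeled trees on n vertices with pairwise tree distance at least d (i.e., any two distinct trees share at most n-1-d common edges). Then |C| · C(n-1, d-1) ≤ F(n, d), where F(n,d) is the number of labeled forests on n vertices with exactly d components. (Sphere-packing bound: the forests obtained by deleting d-1 edges from distinct codeword trees are all distinct.) -/
/-!
A forest on `V` has `|V| - |E|` components, so deleting `d - 1` edges from a tree on `n` vertices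
leaves a forest with exactly `d` components, and distinct choices of deleted edges give distinct
forests. A forest obtained from two trees `T₁ ≠ T₂` of the code would keep `n - d` edges inside
`E(T₁) ∩ E(T₂)`, which has at most `n - 1 - d` edges; hence the `C(n-1, d-1)` forests of the
codewords are pairwise distinct.
-/

namespace SimpleGraph

variable {V : Type*} {G : SimpleGraph V} {u v : V}

theorem Reachable.of_sup_edge {a b : V} (h : (G ⊔ edge u v).Reachable a b) :
    G.Reachable a b ∨ (G.Reachable a u ∧ G.Reachable v b) ∨
      (G.Reachable a v ∧ G.Reachable u b) := by
  obtain ⟨p⟩ := h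
  induction p with
  | nil => exact .inl .rfl
  | @cons a x b hax _ ih =>
    rw [sup_adj, edge_adj] at hax
    rcases hax with hax | ⟨⟨rfl, rfl⟩ | ⟨rfl, rfl⟩, -⟩
    · rcases ih with h | ⟨h₁, h₂⟩ | ⟨h₁, h₂⟩
      · exact .inl (hax.reachable.trans h)
      · exact .inr (.inl ⟨hax.reachable.trans h₁, h₂⟩)
      · exact .inr (.inr ⟨hax.reachable.trans h₁, h₂⟩)
    · rcases ih with h | ⟨-, h⟩ | ⟨-, h⟩
      · exact .inr (.inl ⟨.rfl, h⟩)
      · exact .inr (.inl ⟨.rfl, h⟩)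
      · exact .inl h
    · rcases ih with h | ⟨-, h⟩ | ⟨-, h⟩
      · exact .inr (.inr ⟨.rfl, h⟩)
      · exact .inl h
      · exact .inr (.inr ⟨.rfl, h⟩)

theorem card_connectedComponent_sup_edge [Finite V] (h : ¬G.Reachable u v) :
    Nat.card (G ⊔ edge u v).ConnectedComponent + 1 = Nat.card G.ConnectedComponent := by
  -- `φ` only merges the components of `u` and `v`, so it is injective off the component of `v`.
  set φ := ConnectedComponent.map (Hom.ofLE (le_sup_left : G ≤ G ⊔ edge u v))
  set S : Set G.ConnectedComponent := {G.connectedComponentMk v}ᶜ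
  have hinj : S.InjOn φ := by
    intro c₁ hc₁ c₂ hc₂ heq
    induction c₁ using ConnectedComponent.ind with | h a => ?_
    induction c₂ using ConnectedComponent.ind with | h b => ?_
    simp only [S, Set.mem_compl_singleton_iff, ne_eq, ConnectedComponent.eq] at hc₁ hc₂
    rcases (ConnectedComponent.eq.mp heq).of_sup_edge with hab | ⟨-, hvb⟩ | ⟨hav, -⟩
    · exact ConnectedComponent.sound hab
    · exact absurd hvb.symm hc₂
    · exact absurd hav hc₁
  have himage : φ '' S = Set.univ := by
    refine Set.eq_univ_of_forall fun c => ?_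
    obtain ⟨c, rfl⟩ := ConnectedComponent.surjective_map_ofLE le_sup_left c
    by_cases hc : c = G.connectedComponentMk v
    · refine ⟨G.connectedComponentMk u, fun hu => h (ConnectedComponent.eq.mp hu), ?_⟩
      rw [hc]
      have huv : u ≠ v := by rintro rfl; exact h .rfl
      have hadj : (G ⊔ edge u v).Adj u v := by simp [edge_adj, huv]
      exact ConnectedComponent.sound hadj.reachable
    · exact ⟨c, hc, rfl⟩
  rw [← Set.ncard_univ, ← himage, hinj.ncard_image,
    ← Set.ncard_compl_add_ncard {G.connectedComponentMk v}, Set.ncard_singleton]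

theorem card_connectedComponent_bot :
    Nat.card (⊥ : SimpleGraph V).ConnectedComponent = Nat.card V :=
  (Nat.card_eq_of_bijective _ ⟨fun _ _ h => by simpa using ConnectedComponent.eq.mp h,
    fun c => c.exists_rep⟩).symm

theorem IsAcyclic.card_connectedComponent_add_ncard_edgeSet [Finite V] (hG : G.IsAcyclic) :
    Nat.card G.ConnectedComponent + G.edgeSet.ncard = Nat.card V := by
  induction hk : G.edgeSet.ncard generalizing G with
  | zero =>
    rw [Set.ncard_eq_zero, edgeSet_eq_empty] at hk
    subst hk
    exact card_connectedComponent_bot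
  | succ k ih =>
    obtain ⟨e, he⟩ := Set.nonempty_of_ncard_ne_zero (s := G.edgeSet) (by omega)
    induction e using Sym2.ind with | h u v => ?_
    set H := G.deleteEdges {s(u, v)}
    have hbridge : ¬H.Reachable u v := isAcyclic_iff_forall_isBridge.mp hG he
    have hsup : H ⊔ edge u v = G := by
      ext a b
      have huv : G.Adj u v := he
      simp only [H, sup_adj, deleteEdges_adj, edge_adj, Set.mem_singleton_iff, Sym2.eq_iff]
      grind [huv.ne, huv.symm]
    have hH : H.edgeSet.ncard = k := by
      rw [edgeSet_deleteEdges, Set.ncard_sdiff_singleton_of_mem he, hk, Nat.add_sub_cancel]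
    have := card_connectedComponent_sup_edge hbridge
    rw [hsup] at this
    have := ih (G := H) (hG.anti (deleteEdges_le _)) hH
    omega

theorem IsTree.ncard_edgeSet_add_one [Finite V] (hG : G.IsTree) :
    G.edgeSet.ncard + 1 = Nat.card V := by
  cases nonempty_fintype V
  classical
  rw [← coe_edgeFinset, Set.ncard_coe_finset, hG.card_edgeFinset, Nat.card_eq_fintype_card]

theorem ncard_edgeSet_deleteEdges_add [Finite V] {S : Set (Sym2 V)} (hS : S ⊆ G.edgeSet) :
    (G.deleteEdges S).edgeSet.ncard + S.ncard = G.edgeSet.ncard := by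
  rw [edgeSet_deleteEdges]
  exact Set.ncard_sdiff_add_ncard_of_subset hS

theorem IsTree.card_connectedComponent_deleteEdges [Finite V] (hG : G.IsTree)
    {S : Set (Sym2 V)} (hS : S ⊆ G.edgeSet) :
    Nat.card (G.deleteEdges S).ConnectedComponent = S.ncard + 1 := by
  have hforest := (hG.isAcyclic.anti (deleteEdges_le S)).card_connectedComponent_add_ncard_edgeSet
  have hdelete := ncard_edgeSet_deleteEdges_add hS
  have htree := hG.ncard_edgeSet_add_one
  omega

theorem ncard_image_deleteEdges [Finite V] (G : SimpleGraph V) (k : ℕ) :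
    (G.deleteEdges '' {S ⊆ G.edgeSet | S.ncard = k}).ncard = G.edgeSet.ncard.choose k := by
  rw [Set.InjOn.ncard_image, Set.ncard_powerset_ncard G.edgeSet.toFinite]
  intro S₁ hS₁ S₂ hS₂ h
  have h' := congrArg edgeSet h
  rw [edgeSet_deleteEdges, edgeSet_deleteEdges] at h'
  rw [← Set.sdiff_sdiff_cancel_left hS₁.1, h', Set.sdiff_sdiff_cancel_left hS₂.1]

theorem ncard_edgeSet_le_ncard_inter_add [Finite V] {G₁ G₂ : SimpleGraph V}
    {S₁ S₂ : Set (Sym2 V)} (hS₁ : S₁ ⊆ G₁.edgeSet) (h : G₁.deleteEdges S₁ = G₂.deleteEdges S₂) :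
    G₁.edgeSet.ncard ≤ (G₁.edgeSet ∩ G₂.edgeSet).ncard + S₁.ncard := by
  have hsub : (G₁.deleteEdges S₁).edgeSet ⊆ G₁.edgeSet ∩ G₂.edgeSet :=
    Set.subset_inter (edgeSet_mono (deleteEdges_le S₁))
      (h ▸ edgeSet_mono (deleteEdges_le S₂))
  have := Set.ncard_le_ncard hsub
  have := ncard_edgeSet_deleteEdges_add hS₁
  omega

end SimpleGraph

open SimpleGraph

theorem sphere_packing_bound_general (n d : ℕ) (hd : 1 ≤ d)
    (C : Finset (SimpleGraph (Fin n))) (htree : ∀ T ∈ C, T.IsTree)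
    (hdist : ∀ T₁ ∈ C, ∀ T₂ ∈ C, T₁ ≠ T₂ →
      d ≤ (n - 1) - (T₁.edgeSet ∩ T₂.edgeSet).ncard) :
    C.card * Nat.choose (n - 1) (d - 1)
      ≤ {G : SimpleGraph (Fin n) |
          G.IsAcyclic ∧ Nat.card G.ConnectedComponent = d}.ncard := by
  let ball (T : SimpleGraph (Fin n)) := T.deleteEdges '' {S ⊆ T.edgeSet | S.ncard = d - 1}
  have hedges : ∀ T ∈ C, T.edgeSet.ncard = n - 1 := fun T hT => by
    have := (htree T hT).ncard_edgeSet_add_one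
    rw [Nat.card_fin] at this
    omega
  have hball_card : ∀ T ∈ C, (ball T).ncard = (n - 1).choose (d - 1) := fun T hT => by
    rw [ncard_image_deleteEdges, hedges T hT]
  have hball_forests : ∀ T ∈ C, ball T ⊆
      {G : SimpleGraph (Fin n) | G.IsAcyclic ∧ Nat.card G.ConnectedComponent = d} := by
    rintro T hT _ ⟨S, ⟨hS, hSd⟩, rfl⟩
    refine ⟨(htree T hT).isAcyclic.anti (deleteEdges_le S), ?_⟩
    rw [(htree T hT).card_connectedComponent_deleteEdges hS]
    omega
  have hdisjoint : (C : Set (SimpleGraph (Fin n))).PairwiseDisjoint ball := by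
    intro T₁ hT₁ T₂ hT₂ hne
    refine Set.disjoint_left.mpr ?_
    rintro _ ⟨S₁, ⟨hS₁, hS₁d⟩, rfl⟩ ⟨S₂, -, hS₂⟩
    have := ncard_edgeSet_le_ncard_inter_add hS₁ hS₂.symm
    have := hdist T₁ hT₁ T₂ hT₂ hne
    have := hedges T₁ hT₁
    omega
  calc C.card * (n - 1).choose (d - 1) = ∑ T ∈ C, (ball T).ncard := by
        rw [Finset.sum_congr rfl hball_card, Finset.sum_const, smul_eq_mul]
    _ = (⋃ T ∈ (C : Set (SimpleGraph (Fin n))), ball T).ncard := by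
        rw [C.finite_toSet.ncard_biUnion (fun _ _ => Set.toFinite _) hdisjoint,
          finsum_mem_coe_finset]
    _ ≤ _ := Set.ncard_le_ncard (Set.iUnion₂_subset hball_forests)

/-- Sphere-packing bound: if `C` is a set of labeled trees on `n` vertices
whose pairwise tree distance is at least `d`, then
`|C| · C(n-1, d-1)` is at most the number `F(n,d)` of labeled forests on `n`
vertices with exactly `d` connected components. -/
theorem sphere_packing_bound (n d : ℕ) (hd : 1 ≤ d) (hdn : d ≤ n)
    (C : Finset (SimpleGraph (Fin n))) (htree : ∀ T ∈ C, T.IsTree)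
    (hdist : ∀ T₁ ∈ C, ∀ T₂ ∈ C, T₁ ≠ T₂ →
      d ≤ (n - 1) - (T₁.edgeSet ∩ T₂.edgeSet).ncard) :
    C.card * Nat.choose (n - 1) (d - 1)
      ≤ {G : SimpleGraph (Fin n) |
          G.IsAcyclic ∧ Nat.card G.ConnectedComponent = d}.ncard :=
  sphere_packing_bound_general n d hd C htree hdist
end

section
/- For a fixed tree T on n vertices that is a path (line), the size of the ball of radius 1 around T in tree distance equals (n-1)(n-2)(n+3)/6 + 1. -/
/-!
A tree `T'` at distance one from a tree `T` shares all but one edge `e` with it, so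
`T' = T - e + f` where `f` must reconnect the two components of `T - e` (and `f ≠ e` unless
`T' = T`). For the path `0 — 1 — ⋯ — m`, deleting `j — j + 1` leaves the components
`{0, …, j}` and `{j + 1, …, m}`, so there are `(j + 1)(m - j) - 1` choices for `f`; summing over
`j` gives `m(m - 1)(m + 4)/6` trees besides `T`. A path labelled by an arbitrary bijection is
handled by transporting the ball along the relabelling.
-/

namespace Set

variable {α : Type*} {A B : Set α} {e e' f f' : α}

theorem eq_or_exists_eq_insert_sdiff_singleton (hA : A.Finite) (hB : B.Finite)
    (hcard : A.ncard = B.ncard) (hdiff : (A \ B).ncard ≤ 1) :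
    A = B ∨ ∃ e ∈ A, ∃ f ∉ A, B = insert f (A \ {e}) := by
  have hBA : (B \ A).ncard = (A \ B).ncard :=
    ((ncard_eq_ncard_iff_ncard_sdiff_eq_ncard_sdiff hA hB).1 hcard).symm
  rcases Nat.le_one_iff_eq_zero_or_eq_one.1 hdiff with h | h
  · have hAB : A ⊆ B := by rwa [ncard_eq_zero hA.sdiff, sdiff_eq_empty] at h
    have hBA' : B ⊆ A := by rwa [h, ncard_eq_zero hB.sdiff, sdiff_eq_empty] at hBA
    exact Or.inl (hAB.antisymm hBA')
  · obtain ⟨e, he⟩ := ncard_eq_one.1 h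
    obtain ⟨f, hf⟩ := ncard_eq_one.1 (hBA.trans h)
    simp only [Set.ext_iff, mem_sdiff, mem_singleton_iff] at he hf
    refine Or.inr ⟨e, ((he e).2 rfl).1, f, ((hf f).2 rfl).2, ?_⟩
    ext x
    simp only [mem_insert_iff, mem_sdiff, mem_singleton_iff]
    grind

theorem eq_and_eq_of_insert_sdiff_singleton_eq (he : e ∈ A) (hf : f ∉ A) (hf' : f' ∉ A)
    (h : insert f (A \ {e}) = insert f' (A \ {e'})) : e = e' ∧ f = f' := by
  simp only [Set.ext_iff, mem_insert_iff, mem_sdiff, mem_singleton_iff] at h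
  grind

end Set

namespace SimpleGraph

variable {V W : Type*} {G T T' : SimpleGraph V} {u v a b : V}

noncomputable def treeDist (T T' : SimpleGraph V) : ℕ :=
  (Nat.card V - 1) - (T.edgeSet ∩ T'.edgeSet).ncard

def treeBall (T : SimpleGraph V) (r : ℕ) : Set (SimpleGraph V) :=
  {T' | T'.IsTree ∧ treeDist T T' ≤ r}

theorem Reachable.iff_of_forall_adj {p : V → Prop}
    (hp : ∀ ⦃x y⦄, G.Adj x y → (p x ↔ p y)) (h : G.Reachable a b) : p a ↔ p b := by
  obtain ⟨w⟩ := h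
  induction w with
  | nil => rfl
  | cons hadj _ ih => exact (hp hadj).trans ih

theorem Preconnected.reachable_or_reachable_deleteEdges (hG : G.Preconnected) (u v w : V) :
    (G.deleteEdges {s(u, v)}).Reachable w u ∨ (G.deleteEdges {s(u, v)}).Reachable w v := by
  obtain ⟨p⟩ := hG w u
  generalize hx : u = x at p
  induction p with
  | nil => exact Or.inl (hx ▸ .rfl)
  | @cons w x _ hadj _ ih =>
    subst hx
    by_cases he : s(w, x) = s(u, v)
    · rcases Sym2.eq_iff.1 he with ⟨h, -⟩ | ⟨h, -⟩
      exacts [Or.inl (h ▸ .rfl), Or.inr (h ▸ .rfl)]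
    · have hadj' : (G.deleteEdges {s(u, v)}).Adj w x := (deleteEdges_adj ..).2 ⟨hadj, he⟩
      exact (ih rfl).imp hadj'.reachable.trans hadj'.reachable.trans

theorem edgeSet_deleteEdges_sup_edge (s : Set (Sym2 V)) (hab : a ≠ b) :
    (G.deleteEdges s ⊔ edge a b).edgeSet = insert s(a, b) (G.edgeSet \ s) := by
  rw [edgeSet_sup, edgeSet_deleteEdges, edgeSet_edge_of_ne hab, Set.union_singleton]

theorem IsTree.isTree_deleteEdges_sup_edge (hT : T.IsTree)
    (hab : ¬(T.deleteEdges {s(u, v)}).Reachable a b) :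
    (T.deleteEdges {s(u, v)} ⊔ edge a b).IsTree := by
  set H := T.deleteEdges {s(u, v)}
  have hle : H ≤ H ⊔ edge a b := le_sup_left
  have hadj : (H ⊔ edge a b).Adj a b :=
    Or.inr ((edge_adj ..).2 ⟨Or.inl ⟨rfl, rfl⟩, fun h => hab (h ▸ .rfl)⟩)
  have hside := hT.connected.preconnected.reachable_or_reachable_deleteEdges u v
  have huv' : (H ⊔ edge a b).Reachable u v := by
    rcases hside a with ha | ha <;> rcases hside b with hb | hb
    · exact absurd (ha.trans hb.symm) hab
    · exact ((ha.symm.mono hle).trans hadj.reachable).trans (hb.mono hle)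
    · exact ((hb.symm.mono hle).trans hadj.symm.reachable).trans (ha.mono hle)
    · exact absurd (ha.trans hb.symm) hab
  refine ⟨(connected_iff_exists_forall_reachable _).2 ⟨u, fun w => ?_⟩,
    (hT.isAcyclic.anti (deleteEdges_le _)).sup_edge_of_not_reachable hab⟩
  rcases hside w with h | h
  exacts [(h.mono hle).symm, huv'.trans (h.mono hle).symm]

theorem IsTree.ncard_edgeSet_add_one_s10 [Finite V] (hT : T.IsTree) :
    T.edgeSet.ncard + 1 = Nat.card V := by
  rw [← Nat.card_coe_set_eq]
  exact (isTree_iff_connected_and_card.1 hT).2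

theorem IsTree.treeDist_eq [Finite V] (hT : T.IsTree) :
    treeDist T T' = (T.edgeSet \ T'.edgeSet).ncard := by
  have := Set.ncard_inter_add_ncard_sdiff_eq_ncard T.edgeSet T'.edgeSet
  have := hT.ncard_edgeSet_add_one_s10
  unfold treeDist
  omega

theorem IsTree.mem_treeBall_one_iff [Finite V] (hT : T.IsTree) :
    T' ∈ T.treeBall 1 ↔ T' = T ∨ ∃ u v a b, T.Adj u v ∧ ¬T.Adj a b ∧
      ¬(T.deleteEdges {s(u, v)}).Reachable a b ∧ T' = T.deleteEdges {s(u, v)} ⊔ edge a b := by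
  rw [treeBall, Set.mem_ofPred_eq, hT.treeDist_eq]
  constructor
  · rintro ⟨hT', hdist⟩
    have hcard : T.edgeSet.ncard = T'.edgeSet.ncard := by
      have := hT.ncard_edgeSet_add_one_s10
      have := hT'.ncard_edgeSet_add_one_s10
      omega
    rcases Set.eq_or_exists_eq_insert_sdiff_singleton (Set.toFinite _) (Set.toFinite _) hcard hdist
      with h | ⟨e, he, f, hf, hE⟩
    · exact Or.inl (edgeSet_inj.1 h).symm
    cases e with | h u v
    cases f with | h a b
    have hab : T'.Adj a b := by
      rw [← mem_edgeSet, hE]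
      exact Set.mem_insert _ _
    refine Or.inr ⟨u, v, a, b, he, hf, fun hr => ?_,
      edgeSet_inj.1 (by rw [hE, edgeSet_deleteEdges_sup_edge _ hab.ne])⟩
    -- `s(a, b)` is a bridge of the tree `T'`, yet `T - s(u, v)` joins `a` to `b` without it
    have hle : T.deleteEdges {s(u, v)} ≤ T'.deleteEdges {s(a, b)} := by
      rw [← edgeSet_subset_edgeSet, edgeSet_deleteEdges, edgeSet_deleteEdges, hE]
      exact fun x hx => ⟨Or.inr hx, fun h : x = s(a, b) => hf (h ▸ hx.1)⟩
    exact isBridge_iff.1 (isAcyclic_iff_forall_adj_isBridge.1 hT'.isAcyclic hab) (hr.mono hle)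
  · rintro (rfl | ⟨u, v, a, b, -, -, hab, rfl⟩)
    · exact ⟨hT, by simp⟩
    refine ⟨hT.isTree_deleteEdges_sup_edge hab, ?_⟩
    calc (T.edgeSet \ (T.deleteEdges {s(u, v)} ⊔ edge a b).edgeSet).ncard
        ≤ ({s(u, v)} : Set (Sym2 V)).ncard := by
          refine Set.ncard_le_ncard (fun x ⟨hx, hx'⟩ => ?_) (Set.toFinite _)
          by_contra hxe
          refine hx' (edgeSet_mono le_sup_left ?_)
          rw [edgeSet_deleteEdges]
          exact ⟨hx, hxe⟩
      _ = 1 := Set.ncard_singleton _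

theorem treeDist_map (e : V ≃ W) (T T' : SimpleGraph V) :
    treeDist (T.map e.toEmbedding) (T'.map e.toEmbedding) = treeDist T T' := by
  rw [treeDist, treeDist, Nat.card_congr e.symm, edgeSet_map, edgeSet_map,
    ← Set.image_inter e.toEmbedding.sym2Map.injective,
    Set.ncard_image_of_injective _ e.toEmbedding.sym2Map.injective]

theorem ncard_treeBall_map (e : V ≃ W) (T : SimpleGraph V) (r : ℕ) :
    (treeBall (T.map e.toEmbedding) r).ncard = (treeBall T r).ncard := by
  rw [← Set.ncard_image_of_injective _ (map_injective e.toEmbedding)]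
  congr 1
  ext Y
  obtain ⟨X, rfl⟩ := e.simpleGraph.surjective Y
  have hX : e.simpleGraph X = X.map e.toEmbedding := comap_symm X e
  rw [hX, (map_injective _).mem_set_image]
  simp only [treeBall, Set.mem_ofPred_eq, treeDist_map]
  exact and_congr_left' (Iso.map e X).isTree_iff.symm

end SimpleGraph

theorem six_mul_sum_range_succ_mul_sub (c : ℤ) (m : ℕ) :
    6 * ∑ i ∈ Finset.range m, ((i : ℤ) + 1) * (c - i) =
      3 * c * m * (m + 1) - 2 * (m - 1) * m * (m + 1) := by
  induction m with
  | zero => simp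
  | succ m ih =>
    rw [Finset.sum_range_succ, mul_add, ih]
    push_cast
    ring

theorem sum_fin_succ_mul_sub_sub_one (m : ℕ) :
    ∑ j : Fin m, ((j + 1) * (m - j) - 1) = m * (m - 1) * (m + 4) / 6 := by
  rcases Nat.eq_zero_or_pos m with rfl | hm
  · simp
  rw [Fin.sum_univ_eq_sum_range (fun i => (i + 1) * (m - i) - 1)]
  have hcast : ((∑ i ∈ Finset.range m, ((i + 1) * (m - i) - 1) : ℕ) : ℤ) =
      ∑ i ∈ Finset.range m, (((i : ℤ) + 1) * (m - i) - 1) := by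
    rw [Nat.cast_sum]
    refine Finset.sum_congr rfl fun i hi => ?_
    have hi := Finset.mem_range.1 hi
    rw [Nat.cast_sub (Nat.mul_pos (by omega) (by omega)), Nat.cast_mul, Nat.cast_sub hi.le]
    push_cast
    ring
  have hsum : 6 * ∑ i ∈ Finset.range m, (((i : ℤ) + 1) * (m - i) - 1) =
      m * (m - 1) * (m + 4) := by
    rw [Finset.sum_sub_distrib, mul_sub, six_mul_sum_range_succ_mul_sub]
    simp only [Finset.sum_const, Finset.card_range, Int.nsmul_eq_mul, mul_one]
    ring
  refine (Nat.div_eq_of_eq_mul_left (by norm_num) (Nat.cast_injective (R := ℤ) ?_)).symm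
  rw [Nat.cast_mul _ 6, hcast]
  push_cast [Nat.cast_sub hm]
  linarith

namespace SimpleGraph

variable {m : ℕ}

theorem pathGraph_adj_iff_exists_eq {u v : Fin (m + 1)} :
    (pathGraph (m + 1)).Adj u v ↔ ∃ j : Fin m, s(u, v) = s(j.castSucc, j.succ) := by
  rw [pathGraph_adj]
  constructor
  · rintro (h | h)
    · exact ⟨⟨u, by omega⟩, Sym2.eq_iff.2 (Or.inl ⟨rfl, Fin.ext h.symm⟩)⟩
    · exact ⟨⟨v, by omega⟩, Sym2.eq_iff.2 (Or.inr ⟨Fin.ext h.symm, rfl⟩)⟩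
  · rintro ⟨j, hj⟩
    rcases Sym2.eq_iff.1 hj with ⟨rfl, rfl⟩ | ⟨rfl, rfl⟩ <;> simp

theorem reachable_deleteEdges_pathGraph_iff (j : Fin m) {a b : Fin (m + 1)} :
    ((pathGraph (m + 1)).deleteEdges {s(j.castSucc, j.succ)}).Reachable a b ↔
      (a ≤ j.castSucc ↔ b ≤ j.castSucc) := by
  set H := (pathGraph (m + 1)).deleteEdges {s(j.castSucc, j.succ)}
  have hside {x y} (h : H.Reachable x y) : x ≤ j.castSucc ↔ y ≤ j.castSucc := by
    refine h.iff_of_forall_adj (p := (· ≤ j.castSucc)) fun x y hxy => ?_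
    simp only [H, deleteEdges_adj, pathGraph_adj, Set.mem_singleton_iff, Sym2.eq_iff,
      Fin.le_def, Fin.ext_iff, Fin.val_castSucc, Fin.val_succ] at hxy ⊢
    omega
  have hcut : ¬ j.succ ≤ j.castSucc := (Fin.castSucc_lt_succ (i := j)).not_ge
  refine ⟨hside, fun hab => ?_⟩
  have hreach := (pathGraph_preconnected _).reachable_or_reachable_deleteEdges j.castSucc j.succ
  rcases hreach a with ha | ha <;> rcases hreach b with hb | hb
  · exact ha.trans hb.symm
  · exact absurd (hab.trans (hside hb)) (by simp [hside ha, hcut])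
  · exact absurd (hab.trans (hside hb)) (by simp [hside ha, hcut])
  · exact ha.trans hb.symm

theorem pathGraph_isTree : (pathGraph (m + 1)).IsTree := by
  refine ⟨pathGraph_connected m, isAcyclic_iff_forall_adj_isBridge.2 fun u v h => ?_⟩
  obtain ⟨j, hj⟩ := pathGraph_adj_iff_exists_eq.1 h
  rw [hj, isBridge_iff, reachable_deleteEdges_pathGraph_iff]
  simp [(Fin.castSucc_lt_succ (i := j)).not_ge]

/-- The pair `⟨j, (a, b)⟩` encodes deleting the path edge `j — j + 1` and adding the edge
`a — b`, where `a ≤ j < b`. -/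
def pathExchange (x : (_ : Fin m) × Fin (m + 1) × Fin (m + 1)) : SimpleGraph (Fin (m + 1)) :=
  (pathGraph (m + 1)).deleteEdges {s(x.1.castSucc, x.1.succ)} ⊔ edge x.2.1 x.2.2

def pathExchangeIndex (m : ℕ) : Finset ((_ : Fin m) × Fin (m + 1) × Fin (m + 1)) :=
  Finset.univ.sigma fun j =>
    (Finset.Iic j.castSucc ×ˢ Finset.Ici j.succ).erase (j.castSucc, j.succ)

theorem mem_pathExchangeIndex {j : Fin m} {a b : Fin (m + 1)} :
    ⟨j, (a, b)⟩ ∈ pathExchangeIndex m ↔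
      a ≤ j.castSucc ∧ j.succ ≤ b ∧ (a, b) ≠ (j.castSucc, j.succ) := by
  simp only [pathExchangeIndex, Finset.mem_sigma, Finset.mem_univ, Finset.mem_erase, ne_eq,
    Finset.mem_product, Finset.mem_Iic, Finset.mem_Ici, true_and]
  tauto

theorem card_pathExchangeIndex :
    (pathExchangeIndex m).card = ∑ j : Fin m, ((j + 1) * (m - j) - 1) := by
  rw [pathExchangeIndex, Finset.card_sigma]
  refine Finset.sum_congr rfl fun j _ => ?_
  rw [Finset.card_erase_of_mem (by simp), Finset.card_product, Fin.card_Iic, Fin.card_Ici]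
  simp

theorem not_pathGraph_adj_of_mem_pathExchangeIndex {j : Fin m} {a b : Fin (m + 1)}
    (hx : ⟨j, (a, b)⟩ ∈ pathExchangeIndex m) : a < b ∧ ¬(pathGraph (m + 1)).Adj a b := by
  simp only [mem_pathExchangeIndex, ne_eq, Prod.mk.injEq, Fin.le_def, Fin.ext_iff,
    Fin.val_castSucc, Fin.val_succ] at hx
  rw [pathGraph_adj, Fin.lt_def]
  omega

theorem edgeSet_pathExchange {x} (hx : x ∈ pathExchangeIndex m) :
    (pathExchange x).edgeSet =
      insert s(x.2.1, x.2.2) ((pathGraph (m + 1)).edgeSet \ {s(x.1.castSucc, x.1.succ)}) :=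
  edgeSet_deleteEdges_sup_edge _ (not_pathGraph_adj_of_mem_pathExchangeIndex hx).1.ne

theorem pathExchange_ne_pathGraph {x} (hx : x ∈ pathExchangeIndex m) :
    pathExchange x ≠ pathGraph (m + 1) := by
  intro h
  have hab : s(x.2.1, x.2.2) ∈ (pathExchange x).edgeSet := by
    rw [edgeSet_pathExchange hx]
    exact Set.mem_insert _ _
  rw [h] at hab
  exact (not_pathGraph_adj_of_mem_pathExchangeIndex hx).2 hab

theorem injOn_pathExchange : Set.InjOn (pathExchange (m := m)) ↑(pathExchangeIndex m) := by
  rintro ⟨j, a, b⟩ hx ⟨j', a', b'⟩ hx' h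
  obtain ⟨hlt, hnadj⟩ := not_pathGraph_adj_of_mem_pathExchangeIndex hx
  obtain ⟨hlt', hnadj'⟩ := not_pathGraph_adj_of_mem_pathExchangeIndex hx'
  have hE := congrArg edgeSet h
  rw [edgeSet_pathExchange hx, edgeSet_pathExchange hx'] at hE
  have he : s(j.castSucc, j.succ) ∈ (pathGraph (m + 1)).edgeSet :=
    pathGraph_adj_iff_exists_eq.2 ⟨j, rfl⟩
  obtain ⟨hj, hab⟩ := Set.eq_and_eq_of_insert_sdiff_singleton_eq he hnadj hnadj' hE
  simp only [Sym2.eq_iff, Fin.ext_iff, Fin.val_castSucc, Fin.val_succ, Fin.lt_def]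
    at hj hab hlt hlt'
  obtain rfl : j = j' := Fin.ext (by omega)
  obtain ⟨rfl, rfl⟩ : a = a' ∧ b = b' := ⟨Fin.ext (by omega), Fin.ext (by omega)⟩
  rfl

theorem treeBall_one_pathGraph :
    treeBall (pathGraph (m + 1)) 1 =
      insert (pathGraph (m + 1)) (pathExchange '' ↑(pathExchangeIndex m)) := by
  ext T'
  rw [pathGraph_isTree.mem_treeBall_one_iff, Set.mem_insert_iff, Set.mem_image]
  refine or_congr_right ⟨?_, ?_⟩
  · rintro ⟨u, v, a, b, huv, hnadj, hab, rfl⟩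
    obtain ⟨j, hj⟩ := pathGraph_adj_iff_exists_eq.1 huv
    rw [hj, reachable_deleteEdges_pathGraph_iff] at hab
    rw [hj]
    rcases le_or_gt a j.castSucc with ha | ha
    · have hb : j.succ ≤ b :=
        Fin.castSucc_lt_iff_succ_le.1 (not_le.1 fun hb => hab (iff_of_true ha hb))
      refine ⟨⟨j, (a, b)⟩, mem_pathExchangeIndex.2 ⟨ha, hb, ?_⟩, rfl⟩
      rintro ⟨rfl, rfl⟩
      exact hnadj (pathGraph_adj_iff_exists_eq.2 ⟨j, rfl⟩)
    · have hb : b ≤ j.castSucc := by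
        by_contra hb
        exact hab (iff_of_false ha.not_ge hb)
      refine ⟨⟨j, (b, a)⟩,
        mem_pathExchangeIndex.2 ⟨hb, Fin.castSucc_lt_iff_succ_le.1 ha, ?_⟩,
        by rw [pathExchange, edge_comm]⟩
      rintro ⟨rfl, rfl⟩
      exact hnadj (pathGraph_adj_iff_exists_eq.2 ⟨j, Sym2.eq_swap⟩)
  · rintro ⟨⟨j, a, b⟩, hx, rfl⟩
    obtain ⟨ha, hb, -⟩ := mem_pathExchangeIndex.1 hx
    refine ⟨_, _, a, b, pathGraph_adj_iff_exists_eq.2 ⟨j, rfl⟩,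
      (not_pathGraph_adj_of_mem_pathExchangeIndex hx).2, ?_, rfl⟩
    rw [reachable_deleteEdges_pathGraph_iff]
    exact fun h => (Fin.castSucc_lt_iff_succ_le.2 hb).not_ge (h.1 ha)

theorem ncard_treeBall_one_pathGraph (m : ℕ) :
    (treeBall (pathGraph (m + 1)) 1).ncard = m * (m - 1) * (m + 4) / 6 + 1 := by
  rw [treeBall_one_pathGraph, Set.ncard_insert_of_notMem, injOn_pathExchange.ncard_image,
    Set.ncard_coe_finset, card_pathExchangeIndex, sum_fin_succ_mul_sub_sub_one]
  rintro ⟨x, hx, h⟩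
  exact pathExchange_ne_pathGraph hx h

theorem eq_map_pathGraph {n : ℕ} {V : Type*} {T : SimpleGraph V} (e : Fin n ≃ V)
    (he : ∀ u v, T.Adj u v ↔ ∃ (i : Fin n) (h : (i : ℕ) + 1 < n),
      (u = e i ∧ v = e ⟨(i : ℕ) + 1, h⟩) ∨ (v = e i ∧ u = e ⟨(i : ℕ) + 1, h⟩)) :
    T = (pathGraph n).map e.toEmbedding := by
  ext u v
  obtain ⟨a, rfl⟩ := e.surjective u
  obtain ⟨b, rfl⟩ := e.surjective v
  rw [he, ← Equiv.coe_toEmbedding, map_adj]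
  simp only [Equiv.coe_toEmbedding, e.injective.eq_iff, pathGraph_adj, Fin.ext_iff]
  constructor
  · rintro ⟨i, -, h⟩
    exact ⟨a, b, by omega, rfl, rfl⟩
  · rintro ⟨u', v', h | h, hu, hv⟩
    · exact ⟨a, by omega, by omega⟩
    · exact ⟨b, by omega, by omega⟩

end SimpleGraph

/-- For a line (path) tree `T` on `n` vertices, the radius-1 ball around `T`
in tree distance has size `(n-1)(n-2)(n+3)/6 + 1`. -/
theorem line_ball_radius_one (n : ℕ) (T : SimpleGraph (Fin n)) (hT : T.IsTree)
    (hline : ∃ e : Fin n ≃ Fin n, ∀ u v, T.Adj u v ↔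
      ∃ (i : Fin n) (h : (i : ℕ) + 1 < n),
        (u = e i ∧ v = e ⟨(i : ℕ) + 1, h⟩) ∨ (v = e i ∧ u = e ⟨(i : ℕ) + 1, h⟩)) :
    {T' : SimpleGraph (Fin n) | T'.IsTree ∧
        (n - 1) - (T.edgeSet ∩ T'.edgeSet).ncard ≤ 1}.ncard
      = (n - 1) * (n - 2) * (n + 3) / 6 + 1 := by
  obtain ⟨e, he⟩ := hline
  obtain ⟨m, rfl⟩ : ∃ m, n = m + 1 :=
    Nat.exists_eq_add_one.2 (Fin.pos_iff_nonempty.2 hT.connected.nonempty)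
  have hball : {T' : SimpleGraph (Fin (m + 1)) | T'.IsTree ∧
      (m + 1 - 1) - (T.edgeSet ∩ T'.edgeSet).ncard ≤ 1} = T.treeBall 1 := by
    ext
    simp [SimpleGraph.treeBall, SimpleGraph.treeDist]
  rw [hball, SimpleGraph.eq_map_pathGraph e he, SimpleGraph.ncard_treeBall_map,
    SimpleGraph.ncard_treeBall_one_pathGraph, Nat.add_sub_cancel,
    show m + 1 - 2 = m - 1 by omega]
end

section
/- For any tree T on n vertices, the size of its radius-1 ball in tree distance equals 1 + ∑_{e ∈ E(T)} (a_e · b_e − 1), where for each edge e of T, a_e and b_e are the sizes of the two components obtained by deleting e from T. In particular V_T(n,1) = ∑ (i(n−i) − 1) + 1 over the component-size profiles (i, n−i) of single-edge deletions. -/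
/-!
Deleting an edge `uv` of a tree `T` leaves a forest with exactly two components `A ∋ u` and
`B ∋ v`. The trees containing `T - uv` are exactly the graphs `(T - uv) + xy` with `x ∈ A` and
`y ∈ B`, so there are `|A|·|B|` of them, `T` among them. A tree `T'` lies in the radius-1 ball
iff it contains `T - e` for some edge `e` of `T`, and for `T' ≠ T` this edge is unique: containing
both `T - e` and `T - e'` with `e ≠ e'` would give `T ≤ T'`, hence `T = T'`.
-/

open Set

namespace SimpleGraph

variable {V : Type*} {G T T' : SimpleGraph V} {u v x y : V}

lemma Preconnected.reachable_deleteEdges_or (hT : T.Preconnected) (u v w : V) :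
    (T.deleteEdges {s(u, v)}).Reachable w u ∨ (T.deleteEdges {s(u, v)}).Reachable w v := by
  induction (reachable_iff_reflTransGen w u).mp (hT w u)
    using Relation.ReflTransGen.head_induction_on with
  | refl => exact .inl .rfl
  | @head a b hab _ ih =>
    by_cases he : s(a, b) ∈ ({s(u, v)} : Set (Sym2 V))
    · rcases Sym2.eq_iff.mp he with ⟨hau, -⟩ | ⟨hav, -⟩
      · exact .inl (hau ▸ .rfl)
      · exact .inr (hav ▸ .rfl)
    · have hab' := (deleteEdges_adj.mpr ⟨hab, he⟩).reachable
      exact ih.imp hab'.trans hab'.trans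

lemma supp_connectedComponentMk (G : SimpleGraph V) (u : V) :
    (G.connectedComponentMk u).supp = {w | G.Reachable w u} :=
  ext fun w => (ConnectedComponent.mem_supp_iff _ w).trans ConnectedComponent.eq

lemma injOn_sup_edge (huv : ¬ G.Reachable u v) :
    InjOn (fun p : V × V => G ⊔ edge p.1 p.2)
      ({w | G.Reachable w u} ×ˢ {w | G.Reachable w v}) := by
  rintro ⟨x, y⟩ ⟨hx, hy⟩ ⟨x', y'⟩ ⟨-, hy'⟩ heq
  simp only [mem_ofPred_eq] at hx hy hy' heq
  have hxy : ¬ G.Reachable x y := fun h => huv (hx.symm.trans (h.trans hy))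
  have hadj : (G ⊔ edge x' y').Adj x y := by
    rw [← heq, sup_adj, edge_adj]
    exact .inr ⟨.inl ⟨rfl, rfl⟩, fun h => hxy (h ▸ .rfl)⟩
  rcases (sup_adj _ _ _ _).mp hadj with hG | hedge
  · exact absurd hG.reachable hxy
  · rcases ((edge_adj _ _ _ _).mp hedge).1 with ⟨rfl, rfl⟩ | ⟨rfl, -⟩
    · rfl
    · exact absurd (hx.symm.trans hy') huv

section TwoComponents

variable (hG : ∀ w, G.Reachable w u ∨ G.Reachable w v)
include hG

lemma connected_sup_edge (hxy : ¬ G.Reachable x y) : (G ⊔ edge x y).Connected := by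
  have hle : G ≤ G ⊔ edge x y := le_sup_left
  have hx : (G ⊔ edge x y).Reachable x y := ((edge_le_iff _).mp le_sup_right).elim
    (fun h => by rw [h]) Adj.reachable
  have huv : (G ⊔ edge x y).Reachable u v := by
    rcases hG x with hxu | hxv <;> rcases hG y with hyu | hyv
    · exact absurd (hxu.trans hyu.symm) hxy
    · exact ((hxu.symm.mono hle).trans hx).trans (hyv.mono hle)
    · exact ((hyu.symm.mono hle).trans hx.symm).trans (hxv.mono hle)
    · exact absurd (hxv.trans hyv.symm) hxy
  refine (connected_iff_exists_forall_reachable _).mpr ⟨u, fun w => ?_⟩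
  rcases hG w with hwu | hwv
  · exact (hwu.mono hle).symm
  · exact huv.trans (hwv.mono hle).symm

lemma IsTree.eq_sup_edge_of_le (hT' : T'.IsTree) (hle : G ≤ T') (huv : ¬ G.Reachable u v) :
    ∃ x y, ¬ G.Reachable x y ∧ T' = G ⊔ edge x y := by
  -- `T'` must cross from the `G`-component of `u` to that of `v` along some edge `xy`; then
  -- `G ⊔ edge x y ≤ T'` is already connected, so it is `T'` by minimality.
  obtain ⟨p⟩ := hT'.connected.preconnected u v
  obtain ⟨d, -, hx, hy⟩ := p.exists_boundary_dart {w | G.Reachable u w} .rfl huv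
  have hxy : ¬ G.Reachable d.fst d.snd := fun h => hy (hx.trans h)
  refine ⟨d.fst, d.snd, hxy, ((isTree_iff_minimal_connected.mp hT').eq_of_le
    (connected_sup_edge hG hxy) (sup_le hle ((edge_le_iff _).mpr (.inr d.adj)))).symm⟩

lemma finprod_ncard_supp_eq_mul (huv : ¬ G.Reachable u v) :
    ∏ᶠ c : G.ConnectedComponent, c.supp.ncard =
      (G.connectedComponentMk u).supp.ncard * (G.connectedComponentMk v).supp.ncard := by
  have huniv : (univ : Set G.ConnectedComponent) =
      {G.connectedComponentMk u, G.connectedComponentMk v} := by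
    refine (eq_univ_of_forall fun c => ConnectedComponent.ind (fun w => ?_) c).symm
    rcases hG w with h | h
    · exact .inl (ConnectedComponent.sound h)
    · exact .inr (ConnectedComponent.sound h)
  rw [← finprod_mem_univ, huniv, finprod_mem_pair (mt ConnectedComponent.exact huv)]

lemma setOf_isTree_le_eq_image (hacyc : G.IsAcyclic) (huv : ¬ G.Reachable u v) :
    {T' | T'.IsTree ∧ G ≤ T'} = (fun p : V × V => G ⊔ edge p.1 p.2) ''
      ({w | G.Reachable w u} ×ˢ {w | G.Reachable w v}) := by
  ext T'
  simp only [mem_ofPred_eq, mem_image, mem_prod, Prod.exists]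
  constructor
  · rintro ⟨hT', hle⟩
    obtain ⟨x, y, hxy, rfl⟩ := hT'.eq_sup_edge_of_le hG hle huv
    rcases hG x with hxu | hxv <;> rcases hG y with hyu | hyv
    · exact absurd (hxu.trans hyu.symm) hxy
    · exact ⟨x, y, ⟨hxu, hyv⟩, rfl⟩
    · exact ⟨y, x, ⟨hyu, hxv⟩, by rw [edge_comm]⟩
    · exact absurd (hxv.trans hyv.symm) hxy
  · rintro ⟨x, y, ⟨hx, hy⟩, rfl⟩
    have hxy : ¬ G.Reachable x y := fun h => huv (hx.symm.trans (h.trans hy))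
    exact ⟨⟨connected_sup_edge hG hxy, hacyc.sup_edge_of_not_reachable hxy⟩, le_sup_left⟩

lemma ncard_setOf_isTree_le (hacyc : G.IsAcyclic) (huv : ¬ G.Reachable u v) :
    {T' | T'.IsTree ∧ G ≤ T'}.ncard =
      (G.connectedComponentMk u).supp.ncard * (G.connectedComponentMk v).supp.ncard := by
  rw [setOf_isTree_le_eq_image hG hacyc huv, (injOn_sup_edge huv).ncard_image, ncard_prod,
    supp_connectedComponentMk, supp_connectedComponentMk]

end TwoComponents

lemma IsTree.ncard_setOf_isTree_deleteEdges_le (hT : T.IsTree) {e : Sym2 V}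
    (he : e ∈ T.edgeSet) : {T' | T'.IsTree ∧ T.deleteEdges {e} ≤ T'}.ncard =
      ∏ᶠ c : (T.deleteEdges {e}).ConnectedComponent, c.supp.ncard := by
  induction e using Sym2.ind with
  | _ u v =>
    have hG := hT.connected.preconnected.reachable_deleteEdges_or u v
    have huv : ¬ (T.deleteEdges {s(u, v)}).Reachable u v :=
      isAcyclic_iff_forall_adj_isBridge.mp hT.isAcyclic he
    rw [ncard_setOf_isTree_le hG (hT.isAcyclic.anti (deleteEdges_le _)) huv,
      finprod_ncard_supp_eq_mul hG huv]

lemma IsTree.eq_of_le (hT : T.IsTree) (hT' : T'.IsTree) (h : T ≤ T') : T = T' :=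
  (isTree_iff_minimal_connected.mp hT').eq_of_le hT.connected h

lemma IsTree.pairwiseDisjoint_setOf_isTree_deleteEdges_le (hT : T.IsTree) :
    T.edgeSet.PairwiseDisjoint fun e => {T' | T'.IsTree ∧ T.deleteEdges {e} ≤ T'} \ {T} := by
  intro e _ e' _ hne
  refine Set.disjoint_left.mpr (?_ : ∀ T', _)
  rintro T' ⟨⟨hT', hle⟩, hT'T⟩ ⟨⟨-, hle'⟩, -⟩
  refine hT'T (hT.eq_of_le hT' fun a b hab => ?_).symm
  by_cases he : s(a, b) = e
  · exact hle' (deleteEdges_adj.mpr ⟨hab, fun h => hne (he.symm.trans h)⟩)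
  · exact hle (deleteEdges_adj.mpr ⟨hab, he⟩)

section Finite

variable [Finite V]

lemma IsTree.ncard_edgeSet (hT : T.IsTree) : T.edgeSet.ncard = Nat.card V - 1 := by
  have h := (isTree_iff_connected_and_card.mp hT).2
  rw [Nat.card_coe_set_eq] at h
  omega

lemma IsTree.sub_ncard_inter_edgeSet_le_one_iff (hT : T.IsTree) (hT' : T'.IsTree) :
    (Nat.card V - 1) - (T.edgeSet ∩ T'.edgeSet).ncard ≤ 1 ↔
      T' = T ∨ ∃ e ∈ T.edgeSet, T.deleteEdges {e} ≤ T' := by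
  have hsum := ncard_inter_add_ncard_sdiff_eq_ncard T.edgeSet T'.edgeSet
  have hdel {e : Sym2 V} : T.deleteEdges {e} ≤ T' ↔ T.edgeSet \ T'.edgeSet ⊆ {e} := by
    rw [← edgeSet_subset_edgeSet, edgeSet_deleteEdges, sdiff_subset_comm]
  rw [hT.ncard_edgeSet] at hsum
  rw [show _ ≤ 1 ↔ (T.edgeSet \ T'.edgeSet).ncard ≤ 1 by omega, ncard_le_one_iff_eq]
  constructor
  · rintro (h | ⟨e, h⟩)
    · exact .inl (hT.eq_of_le hT' (edgeSet_subset_edgeSet.mp (sdiff_eq_empty.mp h))).symm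
    · exact .inr ⟨e, (h.symm.subset rfl : e ∈ T.edgeSet \ T'.edgeSet).1, hdel.mpr h.subset⟩
  · rintro (rfl | ⟨e, -, h⟩)
    · exact .inl Set.sdiff_self
    · exact (subset_singleton_iff_eq.mp (hdel.mp h)).imp_right fun h => ⟨e, h⟩

lemma IsTree.setOf_isTree_sub_ncard_inter_edgeSet_le_one (hT : T.IsTree) :
    {T' | T'.IsTree ∧ (Nat.card V - 1) - (T.edgeSet ∩ T'.edgeSet).ncard ≤ 1} =
      insert T (⋃ e ∈ T.edgeSet, {T' | T'.IsTree ∧ T.deleteEdges {e} ≤ T'} \ {T}) := by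
  ext T'
  simp only [mem_insert_iff, mem_iUnion, mem_sdiff, mem_ofPred_eq, mem_singleton_iff]
  constructor
  · rintro ⟨hT', h⟩
    rcases (hT.sub_ncard_inter_edgeSet_le_one_iff hT').mp h with rfl | ⟨e, he, hle⟩
    · exact .inl rfl
    · by_cases hT'T : T' = T
      · exact .inl hT'T
      · exact .inr ⟨e, he, ⟨hT', hle⟩, hT'T⟩
  · rintro (rfl | ⟨e, he, ⟨hT', hle⟩, -⟩)
    · exact ⟨hT, (hT.sub_ncard_inter_edgeSet_le_one_iff hT).mpr (.inl rfl)⟩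
    · exact ⟨hT', (hT.sub_ncard_inter_edgeSet_le_one_iff hT').mpr (.inr ⟨e, he, hle⟩)⟩

end Finite

end SimpleGraph

open SimpleGraph

/-- For any tree `T` on `n` vertices, the size of its radius-1 ball in tree
distance equals `1 + ∑_{e ∈ E(T)} (aₑ·bₑ - 1)`, where `aₑ, bₑ` are the sizes
of the two components of `T` with the edge `e` deleted (their product is the
product of the component sizes of `T.deleteEdges {e}`). -/
theorem ball_radius_one_formula (n : ℕ) (T : SimpleGraph (Fin n)) (hT : T.IsTree) :
    {T' : SimpleGraph (Fin n) | T'.IsTree ∧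
        (n - 1) - (T.edgeSet ∩ T'.edgeSet).ncard ≤ 1}.ncard
      = 1 + ∑ᶠ e ∈ T.edgeSet,
          ((∏ᶠ c : (T.deleteEdges {e}).ConnectedComponent, c.supp.ncard) - 1) := by
  have hball := hT.setOf_isTree_sub_ncard_inter_edgeSet_le_one
  rw [Nat.card_fin] at hball
  have hT_notMem :
      T ∉ ⋃ e ∈ T.edgeSet, {T' | T'.IsTree ∧ T.deleteEdges {e} ≤ T'} \ {T} := by
    simp
  rw [hball, ncard_insert_of_notMem hT_notMem, (toFinite _).ncard_biUnion (fun _ _ => toFinite _)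
    hT.pairwiseDisjoint_setOf_isTree_deleteEdges_le, add_comm]
  refine congrArg (1 + ·) (finsum_mem_congr rfl fun e he => ?_)
  rw [ncard_sdiff_singleton_of_mem (by exact ⟨hT, deleteEdges_le _⟩),
    hT.ncard_setOf_isTree_deleteEdges_le he]
end

section
/- For every integer n ≥ 1, ∑_{i=1}^{n-1} C(n,i) · i^i · (n-i)^{n-i} = n! · ∑_{k=0}^{n-2} n^k / k!. -/
/-!
Expanding `(x - k) ^ (n - k)` binomially and exchanging the two sums, the coefficient of `x ^ j`
in `∑ₖ C(n,k) kᵏ (x - k)^(n-k)` becomes `C(n,j)` times the `(n-j)`-th forward difference of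
`t ↦ t ^ (n-j)` at `0`, which is `(n-j)!`. Hence this polynomial is `∑ⱼ n!/j! xʲ`. At `x = n`
the terms `k = 0, n` on the left and `j = n - 1, n` on the right all equal `nⁿ`.
-/

open Finset Nat

theorem Nat.choose_mul_choose_sub_comm {n j k : ℕ} (h : j + k ≤ n) :
    n.choose k * (n - k).choose j = n.choose j * (n - j).choose k := by
  have := Nat.choose_mul (n := n) (k := n - j) (s := k) (by omega)
  rw [Nat.choose_symm (by omega), show n - j - k = n - k - j by omega,
    Nat.choose_symm (by omega)] at this
  exact this.symm

theorem Finset.sum_range_add_two_eq_add_sum_Icc {M : Type*} [AddCommMonoid M] (f : ℕ → M)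
    (m : ℕ) : ∑ k ∈ range (m + 2), f k = f 0 + ∑ k ∈ Icc 1 m, f k + f (m + 1) := by
  rw [sum_range_succ, range_eq_Ico, sum_eq_sum_Ico_succ_bot (by omega), zero_add,
    Ico_add_one_right_eq_Icc]

section CommRing

variable {R : Type*} [CommRing R]

theorem sum_neg_one_pow_mul_choose_mul_pow_self (m : ℕ) :
    ∑ k ∈ range (m + 1), (-1 : R) ^ (m - k) * m.choose k * (k : R) ^ m = m ! := by
  have := congrFun (fwdDiff_iter_eq_factorial (R := R) (n := m)) 0
  rw [fwdDiff_iter_eq_sum_shift] at this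
  simpa [zsmul_eq_mul] using this

theorem sum_choose_mul_pow_self_mul_sub_pow (x : R) (n : ℕ) :
    ∑ k ∈ range (n + 1), (n.choose k : R) * (k : R) ^ k * (x - k) ^ (n - k) =
      ∑ j ∈ range (n + 1), (n.choose j : R) * (n - j)! * x ^ j := by
  calc _ = ∑ k ∈ range (n + 1), ∑ j ∈ range (n - k + 1),
          (n.choose k : R) * (k : R) ^ k * (x ^ j * (-k : R) ^ (n - k - j) * (n - k).choose j) := by
        simp_rw [sub_eq_add_neg x, add_pow, mul_sum]
    _ = ∑ j ∈ range (n + 1), ∑ k ∈ range (n - j + 1),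
          (n.choose k : R) * (k : R) ^ k * (x ^ j * (-k : R) ^ (n - k - j) * (n - k).choose j) :=
        sum_comm' fun k j => by simp only [mem_range]; omega
    _ = ∑ j ∈ range (n + 1), (n.choose j : R) * (∑ k ∈ range (n - j + 1),
          (-1 : R) ^ (n - j - k) * (n - j).choose k * (k : R) ^ (n - j)) * x ^ j := by
        refine sum_congr rfl fun j hj => ?_
        rw [mul_sum, sum_mul]
        refine sum_congr rfl fun k hk => ?_
        have hjk : j + k ≤ n := by simp only [mem_range] at hj hk; omega
        have hchoose : (n.choose k : R) * (n - k).choose j = n.choose j * (n - j).choose k := by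
          exact_mod_cast congrArg (Nat.cast : ℕ → R) (Nat.choose_mul_choose_sub_comm hjk)
        have hpow : (k : R) ^ (n - j) = k ^ k * k ^ (n - j - k) := by
          rw [← pow_add]; congr 1; omega
        rw [neg_eq_neg_one_mul, mul_pow, show n - k - j = n - j - k by omega, hpow]
        linear_combination
          ((-1 : R) ^ (n - j - k) * (k : R) ^ k * (k : R) ^ (n - j - k) * x ^ j) * hchoose
    _ = _ := by simp_rw [sum_neg_one_pow_mul_choose_mul_pow_self]

end CommRing

theorem abel_type_identity_general (n : ℕ) :
    ∑ i ∈ Finset.Icc 1 (n - 1),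
        (Nat.choose n i : ℝ) * (i : ℝ) ^ i * ((n - i : ℕ) : ℝ) ^ (n - i)
      = (Nat.factorial n : ℝ) *
        ∑ k ∈ Finset.range (n - 1), (n : ℝ) ^ k / (Nat.factorial k : ℝ) := by
  rcases n with _ | m
  · simp
  have key := sum_choose_mul_pow_self_mul_sub_pow ((m + 1 : ℕ) : ℝ) (m + 1)
  rw [sum_range_add_two_eq_add_sum_Icc, sum_range_succ, sum_range_succ] at key
  simp only [choose_zero_right, choose_self, choose_succ_self_right, cast_one, cast_zero, sub_zero,
    sub_self, tsub_zero, tsub_self, add_tsub_cancel_left, pow_zero, factorial_zero, factorial_one,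
    one_mul, mul_one] at key
  have hlhs : ∀ i ∈ Icc 1 m,
      ((m + 1).choose i : ℝ) * (i : ℝ) ^ i * ((m + 1 - i : ℕ) : ℝ) ^ (m + 1 - i)
        = ((m + 1).choose i : ℝ) * (i : ℝ) ^ i * ((m + 1 : ℕ) - i : ℝ) ^ (m + 1 - i) :=
    fun i hi => by rw [Nat.cast_sub (by simp only [mem_Icc] at hi; omega)]
  have hrhs : ∀ k ∈ range m, ((m + 1)! : ℝ) * (((m + 1 : ℕ) : ℝ) ^ k / k !)
      = ((m + 1).choose k : ℝ) * (m + 1 - k)! * ((m + 1 : ℕ) : ℝ) ^ k := fun k hk => by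
    rw [Nat.cast_choose ℝ (by simp only [mem_range] at hk; omega)]
    field_simp
  rw [Nat.add_sub_cancel, sum_congr rfl hlhs, mul_sum, sum_congr rfl hrhs]
  push_cast at key ⊢
  linear_combination key

/-- Abel-type identity: for every `n ≥ 1`,
`∑_{i=1}^{n-1} C(n,i) iⁱ (n-i)^(n-i) = n! ∑_{k=0}^{n-2} nᵏ/k!`. -/
theorem abel_type_identity (n : ℕ) (hn : 1 ≤ n) :
    ∑ i ∈ Finset.Icc 1 (n - 1),
        (Nat.choose n i : ℝ) * (i : ℝ) ^ i * ((n - i : ℕ) : ℝ) ^ (n - i)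
      = (Nat.factorial n : ℝ) *
        ∑ k ∈ Finset.range (n - 1), (n : ℝ) ^ k / (Nat.factorial k : ℝ) :=
  abel_type_identity_general n
end
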